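/- arXiv:1911.04694 — 2 statements merged into one kernel-verified Lean document; each statement's English description precedes it below -/
import Mathlib

section
/- If H is a standard normal random variable and P_p > 0, then E[Q(√P_p·|H|)] = 1/2 − arctan(√P_p)/π, where Q is the Gaussian tail function. -/
/-! With `φ` the standard normal density, symmetry gives `E[Q(a|H|)] = 2 ∫₀^∞ φ(h) Q(a h) dh`,
and the substitution `t = h s` turns `Q(a h)` into `∫ₐ^∞ h φ(h s) ds`. After exchanging the two
integrals the inner one is elementary, `∫₀^∞ h φ(h) φ(h s) dh = 1 / (2π (1 + s²))`, and
`∫ₐ^∞ ds / (1 + s²) = π/2 - arctan a`. -/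

open MeasureTheory ProbabilityTheory Real

noncomputable def gaussQ (x : ℝ) : ℝ :=
  ∫ t in Set.Ioi x, (1 / Real.sqrt (2 * Real.pi)) * Real.exp (-t ^ 2 / 2)

open Set

local notation "φ" => gaussianPDFReal 0 1

lemma gaussianPDFReal_zero_one (x : ℝ) : φ x = (√(2 * π))⁻¹ * exp (-x ^ 2 / 2) := by
  simp [gaussianPDFReal]

lemma gaussQ_eq_integral_gaussianPDFReal (x : ℝ) : gaussQ x = ∫ t in Ioi x, φ t := by
  simp [gaussQ, gaussianPDFReal_zero_one]

lemma gaussQ_nonneg (x : ℝ) : 0 ≤ gaussQ x := by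
  rw [gaussQ_eq_integral_gaussianPDFReal]
  exact setIntegral_nonneg measurableSet_Ioi fun t _ ↦ gaussianPDFReal_nonneg 0 1 t

lemma gaussQ_le_one (x : ℝ) : gaussQ x ≤ 1 := by
  rw [gaussQ_eq_integral_gaussianPDFReal, ← integral_gaussianPDFReal_eq_one 0 one_ne_zero]
  exact setIntegral_le_integral (integrable_gaussianPDFReal 0 1)
    (.of_forall <| gaussianPDFReal_nonneg 0 1)

lemma gaussQ_mul_eq_integral (a : ℝ) {h : ℝ} (hh : 0 < h) :
    gaussQ (a * h) = ∫ s in Ioi a, h * φ (h * s) := by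
  rw [integral_const_mul, integral_comp_mul_left_Ioi _ a hh, smul_eq_mul,
    mul_inv_cancel_left₀ hh.ne', gaussQ_eq_integral_gaussianPDFReal, mul_comm]

lemma integral_Ioi_mul_exp_neg_mul_sq {b : ℝ} (hb : 0 < b) :
    ∫ x in Ioi (0 : ℝ), x * exp (-b * x ^ 2) = (2 * b)⁻¹ := by
  have h := integral_mul_cexp_neg_mul_sq (b := (b : ℂ)) (by simpa using hb)
  apply Complex.ofReal_injective
  rw [← integral_complex_ofReal]
  push_cast
  exact h

lemma integral_Ioi_mul_gaussianPDFReal_mul_gaussianPDFReal (s : ℝ) :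
    ∫ h in Ioi (0 : ℝ), h * (φ h * φ (h * s)) = (2 * π)⁻¹ * (1 + s ^ 2)⁻¹ := by
  have hb : 0 < (1 + s ^ 2) / 2 := by positivity
  have hprod (h : ℝ) : h * (φ h * φ (h * s)) =
      (2 * π)⁻¹ * (h * exp (-((1 + s ^ 2) / 2) * h ^ 2)) := by
    have hexp :
        exp (-h ^ 2 / 2) * exp (-(h * s) ^ 2 / 2) = exp (-((1 + s ^ 2) / 2) * h ^ 2) := by
      rw [← exp_add]; ring_nf
    calc h * (φ h * φ (h * s))
        = (√(2 * π))⁻¹ * (√(2 * π))⁻¹ * (h * (exp (-h ^ 2 / 2) * exp (-(h * s) ^ 2 / 2))) := by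
          simp only [gaussianPDFReal_zero_one]; ring
      _ = _ := by rw [← mul_inv, mul_self_sqrt (by positivity), hexp]
  simp_rw [hprod]
  rw [integral_const_mul, integral_Ioi_mul_exp_neg_mul_sq hb]
  ring

lemma integrable_mul_gaussianPDFReal_mul_gaussianPDFReal (a : ℝ) :
    Integrable (fun p : ℝ × ℝ ↦ p.1 * (φ p.1 * φ (p.1 * p.2)))
      ((volume.restrict (Ioi 0)).prod (volume.restrict (Ioi a))) := by
  have hcont : Continuous (fun p : ℝ × ℝ ↦ p.1 * (φ p.1 * φ (p.1 * p.2))) := by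
    simp only [gaussianPDFReal_zero_one]; fun_prop
  rw [integrable_prod_iff hcont.aestronglyMeasurable]
  refine ⟨?_, ?_⟩
  · filter_upwards [ae_restrict_mem measurableSet_Ioi] with h hh
    exact ((((integrable_gaussianPDFReal 0 1).comp_mul_left' hh.ne').const_mul (φ h)).const_mul
      h).integrableOn
  · refine (integrable_gaussianPDFReal 0 1).integrableOn.mono'
      hcont.norm.stronglyMeasurable.integral_prod_right'.aestronglyMeasurable ?_
    filter_upwards [ae_restrict_mem measurableSet_Ioi] with h (hh : 0 < h)
    have hnorm : ∫ s in Ioi a, ‖h * (φ h * φ (h * s))‖ = φ h * gaussQ (a * h) := by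
      rw [gaussQ_mul_eq_integral a hh, ← integral_const_mul]
      refine setIntegral_congr_fun measurableSet_Ioi fun s _ ↦ ?_
      rw [norm_of_nonneg (mul_nonneg hh.le (mul_nonneg (gaussianPDFReal_nonneg 0 1 h)
        (gaussianPDFReal_nonneg 0 1 _)))]
      ring
    rw [hnorm, norm_of_nonneg (mul_nonneg (gaussianPDFReal_nonneg 0 1 h) (gaussQ_nonneg _))]
    exact mul_le_of_le_one_right (gaussianPDFReal_nonneg 0 1 h) (gaussQ_le_one _)

lemma integral_gaussianReal_comp_abs (f : ℝ → ℝ) :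
    ∫ h, f |h| ∂gaussianReal 0 1 = 2 * ∫ h in Ioi 0, φ h * f h := by
  have hφ (h : ℝ) : φ |h| = φ h := by simp only [gaussianPDFReal_zero_one, sq_abs]
  rw [integral_gaussianReal_eq_integral_smul one_ne_zero,
    ← integral_comp_abs (f := fun h ↦ φ h * f h)]
  simp only [smul_eq_mul, hφ]

lemma integral_gaussQ_mul_abs (a : ℝ) :
    ∫ h, gaussQ (a * |h|) ∂gaussianReal 0 1 = 1 / 2 - arctan a / π := by
  calc ∫ h, gaussQ (a * |h|) ∂gaussianReal 0 1
      = 2 * ∫ h in Ioi 0, φ h * gaussQ (a * h) :=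
        integral_gaussianReal_comp_abs fun x ↦ gaussQ (a * x)
    _ = 2 * ∫ h in Ioi 0, ∫ s in Ioi a, h * (φ h * φ (h * s)) := by
      congr 1
      refine setIntegral_congr_fun measurableSet_Ioi fun h (hh : 0 < h) ↦ ?_
      rw [gaussQ_mul_eq_integral a hh, ← integral_const_mul]
      congr with s
      ring
    _ = 2 * ∫ s in Ioi a, ∫ h in Ioi 0, h * (φ h * φ (h * s)) := by
      rw [integral_integral_swap (integrable_mul_gaussianPDFReal_mul_gaussianPDFReal a)]
    _ = 2 * ∫ s in Ioi a, (2 * π)⁻¹ * (1 + s ^ 2)⁻¹ := by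
      simp_rw [integral_Ioi_mul_gaussianPDFReal_mul_gaussianPDFReal]
    _ = 1 / 2 - arctan a / π := by
      rw [integral_const_mul, integral_Ioi_inv_one_add_sq]
      field_simp

theorem expected_Q_abs_gaussian_general (Pp : ℝ) :
    ∫ h, gaussQ (Real.sqrt Pp * |h|) ∂(gaussianReal 0 1)
      = 1 / 2 - Real.arctan (Real.sqrt Pp) / Real.pi :=
  integral_gaussQ_mul_abs _

theorem expected_Q_abs_gaussian (Pp : ℝ) (hPp : 0 < Pp) :
    ∫ h, gaussQ (Real.sqrt Pp * |h|) ∂(gaussianReal 0 1)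
      = 1 / 2 - Real.arctan (Real.sqrt Pp) / Real.pi :=
  expected_Q_abs_gaussian_general Pp
end

section
/- If 0 < p < 1/2 and β > 0, then ∑_{k=0}^{⌊L/2⌋} C(L,k)·p^k·(1−p)^{L−k}·e^{−β²(L−2k)²/2} → 0 as L → ∞. -/
/-!
Write `q = 1 - p` and `m = L - 2k`. Bounding `C(L,k) ≤ 2^L = 4^k 2^m`, the `k`-th term is at most
`(4pq)^k (2q)^m e^{-β²m²/2}`. Since a Gaussian beats every exponential,
`(2q)^m e^{-β²m²/2} ≤ C r^m` with `r = √(4pq) < 1`, so every term is at most `C r^L`, and the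
sum of the `⌊L/2⌋ + 1` terms is at most `C (L + 1) r^L → 0`.
-/

open Filter Real

lemma exists_pow_mul_exp_neg_mul_sq_le {x s b : ℝ} (hx : 0 < x) (hs : 0 < s) (hb : 0 < b) :
    ∃ C, ∀ m : ℕ, x ^ m * exp (-b * m ^ 2) ≤ C * s ^ m := by
  set a := log (x / s)
  refine ⟨exp (a ^ 2 / (4 * b)), fun m => ?_⟩
  have hxs : x = exp a * s := by rw [exp_log (by positivity)]; field_simp
  -- `a m - b m² ≤ a² / (4b)` is `(a - 2bm)² ≥ 0`
  have hquad : a * m - b * m ^ 2 ≤ a ^ 2 / (4 * b) := by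
    rw [le_div_iff₀ (by positivity)]
    nlinarith [sq_nonneg (a - 2 * b * m)]
  calc x ^ m * exp (-b * m ^ 2) = exp (a * m - b * m ^ 2) * s ^ m := by
        rw [hxs, mul_pow, ← exp_nat_mul, sub_eq_add_neg, exp_add]; ring_nf
    _ ≤ exp (a ^ 2 / (4 * b)) * s ^ m := by gcongr

lemma choose_mul_pow_mul_pow_le {p q : ℝ} (hp : 0 ≤ p) (hq : 0 ≤ q) {L k : ℕ}
    (hk : 2 * k ≤ L) :
    (L.choose k : ℝ) * p ^ k * q ^ (L - k) ≤ (4 * p * q) ^ k * (2 * q) ^ (L - 2 * k) := by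
  obtain ⟨m, rfl⟩ := Nat.exists_eq_add_of_le hk
  have hchoose : ((2 * k + m).choose k : ℝ) ≤ 4 ^ k * 2 ^ m := by
    have := Nat.choose_le_two_pow (2 * k + m) k
    rw [pow_add, pow_mul] at this
    exact_mod_cast this
  calc ((2 * k + m).choose k : ℝ) * p ^ k * q ^ (2 * k + m - k)
      = ((2 * k + m).choose k : ℝ) * ((p * q) ^ k * q ^ m) := by
        rw [show 2 * k + m - k = k + m by omega, pow_add, mul_pow]; ring
    _ ≤ 4 ^ k * 2 ^ m * ((p * q) ^ k * q ^ m) := by gcongr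
    _ = (4 * p * q) ^ k * (2 * q) ^ (2 * k + m - 2 * k) := by
        rw [Nat.add_sub_cancel_left, mul_pow, mul_assoc 4 p, mul_pow, mul_pow]; ring

lemma choose_mul_pow_mul_pow_mul_exp_le {p q β r C : ℝ} (hp : 0 ≤ p) (hq : 0 ≤ q)
    (hpq : 4 * p * q = r ^ 2)
    (hC : ∀ m : ℕ, (2 * q) ^ m * exp (-(β ^ 2 / 2) * m ^ 2) ≤ C * r ^ m)
    {L k : ℕ} (hk : 2 * k ≤ L) :
    (L.choose k : ℝ) * p ^ k * q ^ (L - k) * exp (-β ^ 2 * ((L : ℝ) - 2 * k) ^ 2 / 2) ≤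
      C * r ^ L := by
  have hexp :
      -β ^ 2 * ((L : ℝ) - 2 * k) ^ 2 / 2 = -(β ^ 2 / 2) * ((L - 2 * k : ℕ) : ℝ) ^ 2 := by
    push_cast [hk]; ring
  calc (L.choose k : ℝ) * p ^ k * q ^ (L - k) * exp (-β ^ 2 * ((L : ℝ) - 2 * k) ^ 2 / 2)
      ≤ (4 * p * q) ^ k * ((2 * q) ^ (L - 2 * k) *
          exp (-(β ^ 2 / 2) * ((L - 2 * k : ℕ) : ℝ) ^ 2)) := by
        rw [← mul_assoc, hexp]
        exact mul_le_mul_of_nonneg_right (choose_mul_pow_mul_pow_le hp hq hk) (exp_pos _).le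
    _ ≤ (r ^ 2) ^ k * (C * r ^ (L - 2 * k)) := by rw [hpq]; gcongr ?_ * ?_; exact hC _
    _ = C * r ^ L := by rw [← pow_mul, mul_left_comm, ← pow_add, Nat.add_sub_cancel' hk]

lemma tendsto_natCast_add_one_mul_pow_atTop_nhds_zero {r : ℝ} (hr : 0 ≤ r) (hr' : r < 1) :
    Tendsto (fun n : ℕ => ((n : ℝ) + 1) * r ^ n) atTop (nhds 0) := by
  simpa [add_mul] using (tendsto_self_mul_const_pow_of_lt_one hr hr').add
    (tendsto_pow_atTop_nhds_zero_of_lt_one hr hr')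

theorem binomial_half_sum_with_gaussian_weight_tendsto_zero
    (p β : ℝ) (hp : 0 < p) (hp' : p < 1 / 2) (hβ : 0 < β) :
    Tendsto (fun L : ℕ =>
        ∑ k ∈ Finset.range (L / 2 + 1),
          (L.choose k : ℝ) * p ^ k * (1 - p) ^ (L - k) *
            Real.exp (-β ^ 2 * ((L : ℝ) - 2 * k) ^ 2 / 2))
      atTop (nhds 0) := by
  have hq : 0 ≤ 1 - p := by linarith
  set r := √(4 * p * (1 - p))
  have hr0 : 0 < r := sqrt_pos.2 (by nlinarith)
  have hr1 : r < 1 := (sqrt_lt' one_pos).2 (by nlinarith)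
  have hr2 : 4 * p * (1 - p) = r ^ 2 := (sq_sqrt (by positivity)).symm
  obtain ⟨C, hC⟩ := exists_pow_mul_exp_neg_mul_sq_le (x := 2 * (1 - p)) (by linarith) hr0
    (by positivity : 0 < β ^ 2 / 2)
  have hC0 : 0 ≤ C := zero_le_one.trans (by simpa using hC 0)
  have hbound : ∀ L : ℕ, ∑ k ∈ Finset.range (L / 2 + 1),
      (L.choose k : ℝ) * p ^ k * (1 - p) ^ (L - k) *
        exp (-β ^ 2 * ((L : ℝ) - 2 * k) ^ 2 / 2) ≤ C * ((L + 1) * r ^ L) := fun L =>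
    calc _ ≤ (Finset.range (L / 2 + 1)).card • (C * r ^ L) :=
          Finset.sum_le_card_nsmul _ _ _ fun k hk =>
            choose_mul_pow_mul_pow_mul_exp_le hp.le hq hr2 hC
              (by have := Finset.mem_range.1 hk; omega)
      _ ≤ C * ((L + 1) * r ^ L) := by
          rw [Finset.card_range, nsmul_eq_mul, mul_left_comm]
          gcongr
          exact_mod_cast Nat.succ_le_succ (Nat.div_le_self L 2)
  refine squeeze_zero (fun L => Finset.sum_nonneg fun k _ => by positivity) hbound ?_
  simpa using (tendsto_natCast_add_one_mul_pow_atTop_nhds_zero hr0.le hr1).const_mul C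
end
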